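/- arXiv:1905.03839 — 3 statements merged into one kernel-verified Lean document; each statement's English description precedes it below -/
import Mathlib

section
/- Existence and description of the test ideal (affine case): Let R be a noetherian F-finite commutative ring of prime characteristic p > 0, let 𝔞 ⊆ R be an ideal with 𝔞 ∩ R° ≠ ∅, let t ≥ 0 be a real number, and let c ∈ R° be a big sharp test element for (R, 𝔞^t). Then the ideal of R generated by the union, over all integers e ≥ 0 and all R-linear maps φ : F^e_* R → R, of the images φ(c·𝔞^{⌈t(p^e−1)⌉}) (where c·𝔞^{⌈t(p^e−1)⌉} is viewed as a subset of F^e_* R), is a least element, with respect to inclusion, of the set of ideals J ⊆ R satisfying J ∩ R° ≠ ∅ that are uniformly (𝔞^t, F)-compatible. In particular, such a least element (the test ideal τ(R, 𝔞^t)) exists. -/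
universe u

/-- `R°`: the complement in `R` of the union of the minimal primes of `R`. -/
def RCirc (R : Type u) [CommRing R] : Set R :=
  {x | ∀ P ∈ minimalPrimes R, x ∉ P}

/-- `R` is `F`-finite: `F_* R` (i.e. `R` with the `R`-action `r • x = r ^ p * x`) is a finitely
generated `R`-module. -/
def FFinite (R : Type u) [CommRing R] (p : ℕ) : Prop :=
  ∃ s : Finset R, ∀ x : R, ∃ c : R → R, x = ∑ y ∈ s, c y ^ p * y

/-- `φ : R → R` is additive and `R`-linear as a map `F^e_* R → R`, i.e.
`φ (r ^ (p ^ e) * x) = r * φ x`. -/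
def IsFrobLinear (R : Type u) [CommRing R] (p e : ℕ) (φ : R →+ R) : Prop :=
  ∀ r x : R, φ (r ^ p ^ e * x) = r * φ x

/-- `J` is uniformly `(𝔞^t, F)`-compatible: for every `e ≥ 1` and every `R`-linear
`φ : F^e_* R → R`, `φ (J · 𝔞 ^ ⌈t (p^e - 1)⌉) ⊆ J`. -/
def UnifCompat (R : Type u) [CommRing R] (p : ℕ) (a : Ideal R) (t : ℝ) (J : Ideal R) : Prop :=
  ∀ e : ℕ, 1 ≤ e → ∀ φ : R →+ R, IsFrobLinear R p e φ →
    ∀ x ∈ J * a ^ ⌈t * ((p ^ e - 1 : ℕ) : ℝ)⌉₊, φ x ∈ J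

lemma ceil_aux {p : ℕ} (hp : 1 ≤ p) {t : ℝ} (ht : 0 ≤ t) (e f : ℕ) :
    ⌈t * ((p ^ (e + f) - 1 : ℕ) : ℝ)⌉₊ ≤
      ⌈t * ((p ^ f - 1 : ℕ) : ℝ)⌉₊ + ⌈t * ((p ^ e - 1 : ℕ) : ℝ)⌉₊ * p ^ f := by
  have h1 : (1:ℕ) ≤ p ^ e := Nat.one_le_pow _ _ hp
  have h2 : (1:ℕ) ≤ p ^ f := Nat.one_le_pow _ _ hp
  have h3 : (1:ℕ) ≤ p ^ (e + f) := Nat.one_le_pow _ _ hp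
  have cA : t * ((p ^ e - 1 : ℕ) : ℝ) ≤ (⌈t * ((p ^ e - 1 : ℕ) : ℝ)⌉₊ : ℝ) := Nat.le_ceil _
  have cB : t * ((p ^ f - 1 : ℕ) : ℝ) ≤ (⌈t * ((p ^ f - 1 : ℕ) : ℝ)⌉₊ : ℝ) := Nat.le_ceil _
  have Ee : ((p ^ e - 1 : ℕ) : ℝ) = (p:ℝ) ^ e - 1 := by
    rw [Nat.cast_sub h1]; push_cast; ring
  have Ef : ((p ^ f - 1 : ℕ) : ℝ) = (p:ℝ) ^ f - 1 := by
    rw [Nat.cast_sub h2]; push_cast; ring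
  have Eef : ((p ^ (e + f) - 1 : ℕ) : ℝ) = (p:ℝ) ^ (e + f) - 1 := by
    rw [Nat.cast_sub h3]; push_cast; ring
  rw [Ee] at cA
  rw [Ef] at cB
  rw [Nat.ceil_le, Eef, Ee, Ef]
  push_cast
  have hpf : (0:ℝ) ≤ (p:ℝ) ^ f := by positivity
  have hk := mul_le_mul_of_nonneg_right cA hpf
  have hpa : (p:ℝ) ^ (e + f) = (p:ℝ) ^ e * (p:ℝ) ^ f := pow_add _ _ _
  nlinarith [hk, cB]

lemma comp_frob {R : Type u} [CommRing R] {p e f : ℕ} {φ ψ : R →+ R}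
    (hφ : IsFrobLinear R p e φ) (hψ : IsFrobLinear R p f ψ) :
    IsFrobLinear R p (e + f) (φ.comp ψ) := by
  intro r x
  have h : r ^ p ^ (e + f) * x = (r ^ p ^ e) ^ p ^ f * x := by
    rw [pow_add, pow_mul]
  show φ (ψ (r ^ p ^ (e + f) * x)) = r * φ (ψ x)
  rw [h, hψ (r ^ p ^ e) x, hφ r (ψ x)]

/-- **Existence and description of the test ideal**: the ideal generated by the union over all
`e ≥ 0` and all `R`-linear `φ : F^e_* R → R` of the images `φ(c · 𝔞 ^ ⌈t (p^e - 1)⌉)`, where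
`c` is a big sharp test element, is a least element of the set of ideals meeting `R°` that are
uniformly `(𝔞^t, F)`-compatible. -/
theorem test_ideal_exists
    {R : Type u} [CommRing R] [IsNoetherianRing R]
    (p : ℕ) (hp : p.Prime) [CharP R p]
    (hFfin : FFinite R p)
    (a : Ideal R) (t : ℝ) (ht : 0 ≤ t)
    (ha : ((a : Set R) ∩ RCirc R).Nonempty)
    (c : R) (hc : c ∈ RCirc R)
    (hbig : ∀ d ∈ RCirc R, ∃ e : ℕ, 1 ≤ e ∧ ∃ φ : R →+ R, IsFrobLinear R p e φ ∧
      c ∈ φ '' ((Ideal.span {d} * a ^ ⌈t * ((p ^ e - 1 : ℕ) : ℝ)⌉₊ : Ideal R) : Set R)) :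
    IsLeast {J : Ideal R | ((J : Set R) ∩ RCirc R).Nonempty ∧ UnifCompat R p a t J}
      (Ideal.span {y : R | ∃ (e : ℕ) (φ : R →+ R), IsFrobLinear R p e φ ∧
        y ∈ φ '' ((Ideal.span {c} * a ^ ⌈t * ((p ^ e - 1 : ℕ) : ℝ)⌉₊ : Ideal R) : Set R)}) := by
  have hp1 : 1 ≤ p := hp.pos
  set S : Set R := {y : R | ∃ (e : ℕ) (φ : R →+ R), IsFrobLinear R p e φ ∧
      y ∈ φ '' ((Ideal.span {c} * a ^ ⌈t * ((p ^ e - 1 : ℕ) : ℝ)⌉₊ : Ideal R) : Set R)} with hSdef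
  -- N 0 simplification
  have hN0 : (Ideal.span {c} * a ^ ⌈t * ((p ^ 0 - 1 : ℕ) : ℝ)⌉₊ : Ideal R) = Ideal.span {c} := by
    norm_num
  -- key: stability
  have key : ∀ (e : ℕ) (φ : R →+ R), IsFrobLinear R p e φ →
      ∀ s ∈ Ideal.span S, ∀ r n : R, n ∈ a ^ ⌈t * ((p ^ e - 1 : ℕ) : ℝ)⌉₊ →
        φ (r * s * n) ∈ Ideal.span S := by
    intro e φ hφ s hs
    induction hs using Submodule.span_induction with
    | mem y hy =>
      intro r n hn
      obtain ⟨f, ψ, hψ, z, hz, rfl⟩ := hy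
      have h1 : r * ψ z * n = ψ ((r * n) ^ p ^ f * z) := by
        rw [hψ (r * n) z]; ring
      rw [h1]
      apply Ideal.subset_span
      refine ⟨e + f, φ.comp ψ, comp_frob hφ hψ, (r * n) ^ p ^ f * z, ?_, rfl⟩
      -- membership
      have hnp : n ^ p ^ f ∈ (a ^ ⌈t * ((p ^ e - 1 : ℕ) : ℝ)⌉₊) ^ p ^ f :=
        Ideal.pow_mem_pow hn _
      have hzn : z * n ^ p ^ f ∈
          Ideal.span {c} * a ^ (⌈t * ((p ^ f - 1 : ℕ) : ℝ)⌉₊ + ⌈t * ((p ^ e - 1 : ℕ) : ℝ)⌉₊ * p ^ f) := by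
        rw [pow_add, ← mul_assoc]
        rw [← pow_mul] at hnp
        exact Ideal.mul_mem_mul hz hnp
      have hle : Ideal.span {c} * a ^ (⌈t * ((p ^ f - 1 : ℕ) : ℝ)⌉₊ + ⌈t * ((p ^ e - 1 : ℕ) : ℝ)⌉₊ * p ^ f)
          ≤ Ideal.span {c} * a ^ ⌈t * ((p ^ (e + f) - 1 : ℕ) : ℝ)⌉₊ :=
        Ideal.mul_mono_right (Ideal.pow_le_pow_right (ceil_aux hp1 ht e f))
      have : (r * n) ^ p ^ f * z = r ^ p ^ f * (z * n ^ p ^ f) := by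
        rw [mul_pow]; ring
      rw [this]
      exact Ideal.mul_mem_left _ _ (hle hzn)
    | zero =>
      intro r n hn
      simp
    | add x y hx hy ihx ihy =>
      intro r n hn
      have h : r * (x + y) * n = r * x * n + r * y * n := by ring
      rw [h, map_add]
      exact Submodule.add_mem _ (ihx r n hn) (ihy r n hn)
    | smul u x hx ihx =>
      intro r n hn
      have h : r * (u • x) * n = (r * u) * x * n := by
        simp only [smul_eq_mul]; ring
      rw [h]
      exact ihx (r * u) n hn
  -- τ is compatible
  have compat : UnifCompat R p a t (Ideal.span S) := by
    intro e he φ hφ x hx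
    refine Submodule.mul_induction_on hx ?_ ?_
    · intro m hm n hn
      have := key e φ hφ m hm 1 n hn
      rwa [one_mul] at this
    · intro x y hx' hy'
      rw [map_add]; exact Submodule.add_mem _ hx' hy'
  -- c ∈ span S
  have hcS : c ∈ Ideal.span S := by
    apply Ideal.subset_span
    refine ⟨0, AddMonoidHom.id R, ?_, c, ?_, rfl⟩
    · intro r x; simp
    · rw [hN0]; exact Ideal.mem_span_singleton_self c
  constructor
  · exact ⟨⟨c, hcS, hc⟩, compat⟩
  · rintro J ⟨⟨d, hdJ, hdR⟩, hJ⟩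
    rw [Ideal.span_le]
    -- first: c ∈ J
    have hcJ : c ∈ J := by
      obtain ⟨f, hf, ψ, hψ, z, hz, hzc⟩ := hbig d hdR
      have hz' : z ∈ J * a ^ ⌈t * ((p ^ f - 1 : ℕ) : ℝ)⌉₊ := by
        refine Ideal.mul_mono_left ?_ hz
        rw [Ideal.span_le]; simpa using hdJ
      exact hzc ▸ hJ f hf ψ hψ z hz'
    rintro y ⟨e, φ, hφ, x, hx, rfl⟩
    rcases Nat.eq_zero_or_pos e with he | he
    · subst he
      rw [hN0] at hx
      rw [SetLike.mem_coe, Ideal.mem_span_singleton] at hx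
      obtain ⟨r, rfl⟩ := hx
      have h1 : c * r = r ^ p ^ 0 * c := by rw [pow_zero, pow_one]; ring
      rw [h1, hφ]
      apply Ideal.mul_mem_left
      -- φ c ∈ J via composition
      obtain ⟨f, hf, ψ, hψ, z, hz, hzc⟩ := hbig d hdR
      have hz' : z ∈ J * a ^ ⌈t * ((p ^ f - 1 : ℕ) : ℝ)⌉₊ := by
        refine Ideal.mul_mono_left ?_ hz
        rw [Ideal.span_le]; simpa using hdJ
      have hcomp : IsFrobLinear R p f (φ.comp ψ) := by
        have := comp_frob hφ hψ
        rwa [Nat.zero_add] at this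
      have := hJ f hf (φ.comp ψ) hcomp z hz'
      rw [AddMonoidHom.comp_apply, hzc] at this
      exact this
    · have hx' : x ∈ J * a ^ ⌈t * ((p ^ e - 1 : ℕ) : ℝ)⌉₊ := by
        refine Ideal.mul_mono_left ?_ hx
        rw [Ideal.span_le]; simpa using hcJ
      exact hJ e he φ hφ x hx'
end

section
/- Let (A, 𝔪) be a noetherian complete local ring. Then every pure ring homomorphism f : A → B splits as a homomorphism of A-modules; that is, there exists an A-linear map g : B → A (where B is regarded as an A-module via f) such that g(f(a)) = a for all a ∈ A. -/
/-!
Purity makes every finite system of linear equations over `A` that has a solution in `B` solvable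
in `A`. Apply this to the equations `∑ c_b x_b = a`, one for each relation `∑ c_b • b = f a` in `B`:
an `A`-valued solution `x : B → A` of all of them at once is exactly an `A`-linear retraction of
`f`. A complete noetherian local ring is linearly compact (a family of cosets `a i + I i` with the
finite intersection property has a common point): modulo `𝔪 ^ n` this is the artinian property of
`A ⧸ 𝔪 ^ n`, the approximations can be chosen to form a Cauchy sequence, and Krull's intersection
theorem shows that its limit lies in every coset. Linear compactness lets finitely solvable
systems be solved outright, by a Zorn argument as in the proof of Tychonoff's theorem.
-/

universe u

open scoped TensorProduct

/-- `B` regarded as an `A`-module via restriction of scalars along `f : A →+* B`. -/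
def PushMod {A B : Type u} [CommRing A] [CommRing B] (f : A →+* B) : Type u := B

/-- The canonical map `B → PushMod f`. -/
def PushMod.of {A B : Type u} [CommRing A] [CommRing B] (f : A →+* B) (b : B) : PushMod f := b

noncomputable instance {A B : Type u} [CommRing A] [CommRing B] (f : A →+* B) :
    AddCommGroup (PushMod f) := inferInstanceAs (AddCommGroup B)

noncomputable instance {A B : Type u} [CommRing A] [CommRing B] (f : A →+* B) :
    Module A (PushMod f) := Module.compHom B f

/-- `f : A →+* B` is a pure ring homomorphism: for every `A`-module `M` the induced map
`M ≅ M ⊗_A A → M ⊗_A B`, `m ↦ m ⊗ 1` (with `B` an `A`-module via `f`), is injective. -/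
def IsPureHom {A B : Type u} [CommRing A] [CommRing B] (f : A →+* B) : Prop :=
  ∀ (M : Type u) [AddCommGroup M] [Module A M],
    Function.Injective fun m : M => m ⊗ₜ[A] PushMod.of f 1

open IsLocalRing

theorem IsLocalRing.isArtinianRing_quotient_maximalIdeal_pow {A : Type*} [CommRing A]
    [IsNoetherianRing A] [IsLocalRing A] (n : ℕ) :
    IsArtinianRing (A ⧸ maximalIdeal A ^ n) := by
  rcases n.eq_zero_or_pos with rfl | hn
  · rw [pow_zero, Ideal.one_eq_top]
    have : Subsingleton (A ⧸ (⊤ : Ideal A)) := Ideal.Quotient.subsingleton_iff.mpr rfl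
    infer_instance
  · apply IsLocalRing.quotient_artinian_of_mem_minimalPrimes_of_isLocalRing
    rw [← Ideal.radical_minimalPrimes, Ideal.radical_pow _ hn.ne',
      (maximalIdeal.isMaximal A).isPrime.radical, Ideal.minimalPrimes_eq_subsingleton_self]
    rfl

theorem Ideal.iInf_sup_pow_eq_of_isLocalRing {A : Type*} [CommRing A] [IsNoetherianRing A]
    [IsLocalRing A] {I : Ideal A} (hI : I ≠ ⊤) (J : Ideal A) : ⨅ n : ℕ, J ⊔ I ^ n = J := by
  refine le_antisymm (fun x hx => ?_) (le_iInf fun _ => le_sup_left)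
  rw [← Ideal.Quotient.eq_zero_iff_mem, ← Submodule.mem_bot A (M := A ⧸ J),
    ← I.iInf_pow_smul_eq_bot_of_isLocalRing (M := A ⧸ J) hI, Submodule.mem_iInf]
  intro n
  obtain ⟨j, hj, m, hm, rfl⟩ := Submodule.mem_sup.1 (iInf_le (fun n : ℕ => J ⊔ I ^ n) n hx)
  rw [map_add, Ideal.Quotient.eq_zero_iff_mem.2 hj, zero_add]
  simpa [Algebra.smul_def] using
    Submodule.smul_mem_smul (M := A ⧸ J) hm (Submodule.mem_top (x := 1))

section CosetFamily

variable {A : Type*} [CommRing A] {ι : Type*} (a : ι → A) (I : ι → Ideal A)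

def IsNearFiniteIntersections (J : Ideal A) (x : A) : Prop :=
  ∀ s : Finset ι, ∃ y, (∀ i ∈ s, y - a i ∈ I i) ∧ x - y ∈ J

variable {a I}

/-- Choose a finite `s₀` for which `K ⊓ ⨅ i ∈ s₀, I i` is minimal modulo `J` (as `A ⧸ J` is
artinian); any point `x` of the `s₀`-intersection that is `K`-close to `c` is then `J`-close to
every finite intersection. -/
theorem IsNearFiniteIntersections.exists_refinement {J K : Ideal A} [IsArtinianRing (A ⧸ J)]
    {c : A} (hc : IsNearFiniteIntersections a I K c) :
    ∃ x, IsNearFiniteIntersections a I J x ∧ x - c ∈ K := by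
  classical
  let X (s : Finset ι) : Ideal A := K ⊓ ⨅ i ∈ s, I i
  have mem_X {s z} : z ∈ X s ↔ z ∈ K ∧ ∀ i ∈ s, z ∈ I i := by
    simp [X, Submodule.mem_iInf]
  obtain ⟨_, ⟨s₀, rfl⟩, hmin⟩ := wellFounded_lt.has_min
    (Set.range fun s => (X s).map (Ideal.Quotient.mk J)) ⟨_, ∅, rfl⟩
  obtain ⟨x, hxs₀, hcx⟩ := hc s₀
  refine ⟨x, fun s => ?_, by rw [← neg_sub]; exact neg_mem hcx⟩
  obtain ⟨y, hys, hcy⟩ := hc (s₀ ∪ s)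
  have hxy : x - y ∈ X s₀ := by
    refine mem_X.2 ⟨by simpa using sub_mem hcy hcx, fun i hi => ?_⟩
    simpa using sub_mem (hxs₀ i hi) (hys i (Finset.mem_union_left s hi))
  have hstable : (X (s₀ ∪ s)).map (Ideal.Quotient.mk J) = (X s₀).map (Ideal.Quotient.mk J) :=
    (Ideal.map_mono fun z hz => mem_X.2 ⟨(mem_X.1 hz).1,
      fun i hi => (mem_X.1 hz).2 i (Finset.mem_union_left s hi)⟩).eq_of_not_lt
      (hmin _ ⟨_, rfl⟩)
  have hxy' := Ideal.mem_map_of_mem (Ideal.Quotient.mk J) hxy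
  rw [← hstable] at hxy'
  obtain ⟨k, hk, hkxy⟩ := (Ideal.mem_map_iff_of_surjective _ Ideal.Quotient.mk_surjective).1 hxy'
  refine ⟨y + k, fun i hi => ?_, ?_⟩
  · simpa [add_sub_right_comm] using add_mem (hys i (Finset.mem_union_right s₀ hi))
      ((mem_X.1 hk).2 i (Finset.mem_union_right s₀ hi))
  · rw [Ideal.Quotient.eq] at hkxy
    simpa [sub_sub] using neg_mem hkxy

end CosetFamily

def IsLinearlyCompact (A : Type u) [CommRing A] : Prop :=
  ∀ (ι : Type u) (a : ι → A) (I : ι → Ideal A),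
    (∀ s : Finset ι, ∃ x, ∀ i ∈ s, x - a i ∈ I i) → ∃ x, ∀ i, x - a i ∈ I i

theorem isLinearlyCompact_of_isAdicComplete {A : Type u} [CommRing A] [IsNoetherianRing A]
    [IsLocalRing A] [IsAdicComplete (maximalIdeal A) A] : IsLinearlyCompact A := by
  intro ι a I h
  have hpow (n : ℕ) : (maximalIdeal A ^ n • ⊤ : Submodule A A) = maximalIdeal A ^ n := by
    rw [smul_eq_mul, Ideal.mul_top]
  have hstep (n : ℕ) (c : A) (hc : IsNearFiniteIntersections a I (maximalIdeal A ^ n) c) :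
      ∃ x, IsNearFiniteIntersections a I (maximalIdeal A ^ (n + 1)) x ∧
        x - c ∈ maximalIdeal A ^ n :=
    have := isArtinianRing_quotient_maximalIdeal_pow (A := A) (n + 1)
    hc.exists_refinement
  choose! next hnext hnext_sub using hstep
  let x : ℕ → A := fun n => Nat.rec 0 next n
  have hx (n : ℕ) : IsNearFiniteIntersections a I (maximalIdeal A ^ n) (x n) := by
    induction n with
    | zero => exact fun s => (h s).imp fun y hy => ⟨hy, by simp⟩
    | succ n ih => exact hnext n _ ih
  obtain ⟨L, hL⟩ := IsPrecomplete.prec inferInstance (I := maximalIdeal A) (f := x) <|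
    (AdicCompletion.isAdicCauchy_iff _ _ x).2 fun n => by
      rw [SModEq.sub_mem, hpow, ← neg_mem_iff, neg_sub]
      exact hnext_sub n _ (hx n)
  refine ⟨L, fun i => ?_⟩
  rw [← Ideal.iInf_sup_pow_eq_of_isLocalRing (maximalIdeal.isMaximal A).ne_top (I i),
    Submodule.mem_iInf]
  intro n
  obtain ⟨y, hy, hxy⟩ := hx n {i}
  have hxL := SModEq.sub_mem.1 (hL n)
  rw [hpow] at hxL
  rw [show L - a i = (y - a i) + ((x n - y) - (x n - L)) by ring]
  exact Submodule.add_mem_sup (hy i (Finset.mem_singleton_self i)) (sub_mem hxy hxL)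

section LinearSystems

variable {A : Type u} [CommRing A] {M : Type u} [AddCommGroup M] [Module A M]

def IsFinitelySolvable (T : Set (M × A)) : Prop :=
  ∀ t : Finset (M × A), ↑t ⊆ T → ∃ φ : M →ₗ[A] A, ∀ e ∈ t, φ e.1 = e.2

theorem IsFinitelySolvable.exists_maximal {T : Set (M × A)} (hT : IsFinitelySolvable T) :
    ∃ T', T ⊆ T' ∧ Maximal IsFinitelySolvable T' := by
  refine zorn_subset_nonempty {T | IsFinitelySolvable T} (fun c hc hchain hne => ?_) T hT
  refine ⟨⋃₀ c, fun t ht => ?_, fun _ => Set.subset_sUnion_of_mem⟩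
  obtain ⟨T', hT'c, htT'⟩ :=
    hchain.directedOn.exists_mem_subset_of_finite_of_subset_sUnion hne t.finite_toSet ht
  exact hc hT'c t htT'

theorem IsFinitelySolvable.eq_of_mem {T : Set (M × A)} (hT : IsFinitelySolvable T) {m : M}
    {a b : A} (ha : (m, a) ∈ T) (hb : (m, b) ∈ T) : a = b := by
  classical
  obtain ⟨φ, hφ⟩ := hT {(m, a), (m, b)} (by simp [Set.insert_subset_iff, ha, hb])
  exact (hφ (m, a) (by simp)).symm.trans (hφ (m, b) (by simp))

/-- The values at `m` of the solutions of a finite subsystem `t` form a coset `φ t m + I t`, and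
these cosets have the finite intersection property. -/
theorem IsFinitelySolvable.exists_insert (hA : IsLinearlyCompact A) {T : Set (M × A)}
    (hT : IsFinitelySolvable T) (m : M) : ∃ v, IsFinitelySolvable (insert (m, v) T) := by
  classical
  let ι := {t : Finset (M × A) // ↑t ⊆ T}
  choose φ hφ using fun t : ι => hT t.1 t.2
  let H (t : ι) : Submodule A (M →ₗ[A] A) := ⨅ e ∈ t.1, LinearMap.ker (LinearMap.applyₗ e.1)
  have mem_H {t ψ} : ψ ∈ H t ↔ ∀ e ∈ t.1, ψ e.1 = 0 := by
    simp [H, Submodule.mem_iInf]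
  obtain ⟨v, hv⟩ := hA ι (fun t => φ t m) (fun t => (H t).map (LinearMap.applyₗ m)) fun σ => by
    obtain ⟨χ, hχ⟩ := hT (σ.biUnion Subtype.val) (by simpa using fun t _ => t.2)
    refine ⟨χ m, fun t ht => ⟨χ - φ t, mem_H.2 fun e he => ?_, rfl⟩⟩
    rw [LinearMap.sub_apply, hχ e (Finset.mem_biUnion.2 ⟨t, ht, he⟩), hφ t e he, sub_self]
  refine ⟨v, fun t ht => ?_⟩
  have hsub : ↑(t.erase (m, v)) ⊆ T := fun e he => by
    simpa [(Finset.mem_erase.1 he).1] using ht (Finset.mem_of_mem_erase he)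
  obtain ⟨ψ, hψ, hψm⟩ := hv ⟨_, hsub⟩
  refine ⟨φ ⟨_, hsub⟩ + ψ, fun e he => ?_⟩
  by_cases hem : e = (m, v)
  · subst hem
    rw [LinearMap.applyₗ_apply_apply] at hψm
    rw [LinearMap.add_apply, hψm, add_sub_cancel]
  · have he' := Finset.mem_erase.2 ⟨hem, he⟩
    rw [LinearMap.add_apply, hφ _ e he', mem_H.1 hψ e he', add_zero]

theorem IsLinearlyCompact.exists_linearMap (hA : IsLinearlyCompact A) {T : Set (M × A)}
    (hT : IsFinitelySolvable T) : ∃ φ : M →ₗ[A] A, ∀ e ∈ T, φ e.1 = e.2 := by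
  classical
  obtain ⟨T', hTT', hmax⟩ := hT.exists_maximal
  have hmem (m : M) : ∃ v, (m, v) ∈ T' := by
    obtain ⟨v, hv⟩ := hmax.1.exists_insert hA m
    exact ⟨v, hmax.2 hv (Set.subset_insert _ _) (Set.mem_insert _ _)⟩
  choose v hv using hmem
  have hsolve (t : Finset M) : ∃ φ : M →ₗ[A] A, ∀ m ∈ t, φ m = v m := by
    obtain ⟨φ, hφ⟩ := hmax.1 (t.image fun m => (m, v m)) (by
      rw [Finset.coe_image]; exact Set.image_subset_iff.2 fun m _ => hv m)
    exact ⟨φ, fun m hm => hφ (m, v m) (Finset.mem_image_of_mem _ hm)⟩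
  let φ : M →ₗ[A] A :=
    { toFun := v
      map_add' := fun m m' => by
        obtain ⟨ψ, hψ⟩ := hsolve {m, m', m + m'}
        rw [← hψ m (by simp), ← hψ m' (by simp), ← hψ (m + m') (by simp), map_add]
      map_smul' := fun r m => by
        obtain ⟨ψ, hψ⟩ := hsolve {m, r • m}
        rw [← hψ m (by simp), ← hψ (r • m) (by simp), map_smul, RingHom.id_apply] }
  exact ⟨φ, fun e he => hmax.1.eq_of_mem (hv e.1) (hTT' he)⟩

end LinearSystems

namespace IsPureHom

variable {A B : Type u} [CommRing A] [CommRing B] {f : A →+* B}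

theorem mem_range_of_tmul_mem_range (hf : IsPureHom f) {N : Type*} {P : Type u} [AddCommGroup N]
    [Module A N] [AddCommGroup P] [Module A P] (u : N →ₗ[A] P) {d : P}
    (hd : d ⊗ₜ[A] PushMod.of f 1 ∈ LinearMap.range (u.rTensor (PushMod f))) :
    d ∈ LinearMap.range u := by
  obtain ⟨z, hz⟩ := hd
  rw [← Submodule.Quotient.mk_eq_zero]
  apply hf (P ⧸ LinearMap.range u)
  change (LinearMap.range u).mkQ d ⊗ₜ[A] PushMod.of f 1 = (0 : P ⧸ LinearMap.range u) ⊗ₜ[A] _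
  rw [TensorProduct.zero_tmul, ← LinearMap.rTensor_tmul, ← hz, ← LinearMap.rTensor_comp_apply,
    LinearMap.range_mkQ_comp, LinearMap.rTensor_zero, LinearMap.zero_apply]

theorem exists_solution (hf : IsPureHom f) {κ : Type u} (t : Finset ((κ →₀ A) × A))
    (y : κ → B) (hy : ∀ e ∈ t, (e.1.sum fun k r => f r * y k) = f e.2) :
    ∃ x : κ → A, ∀ e ∈ t, (e.1.sum fun k r => r * x k) = e.2 := by
  classical
  let u : (κ → A) →ₗ[A] (t → A) :=
    LinearMap.pi fun e => e.1.1.sum fun k r => r • LinearMap.proj k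
  have hu (x : κ → A) (e : t) : u x e = e.1.1.sum fun k r => r * x k := by
    simp [u, Finsupp.sum, LinearMap.sum_apply]
  let S : Finset κ := t.biUnion fun e => e.1.support
  have key : (fun e : t => e.1.2) ⊗ₜ[A] PushMod.of f 1 =
      u.rTensor _ (∑ k ∈ S, Pi.single k 1 ⊗ₜ PushMod.of f (y k)) := by
    apply ((TensorProduct.comm A _ _).trans
      (TensorProduct.piScalarRight A A (PushMod f) t)).injective
    ext e
    simp only [LinearEquiv.trans_apply, map_sum, LinearMap.rTensor_tmul, TensorProduct.comm_tmul,
      TensorProduct.piScalarRight_apply, TensorProduct.piScalarRightHom_tmul, Finset.sum_apply]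
    have hsingle (k : κ) : u (Pi.single k 1) e = e.1.1 k := by
      simp [hu, Pi.single_apply, eq_comm]
    simp only [hsingle]
    change f e.1.2 * 1 = ∑ k ∈ S, f (e.1.1 k) * y k
    rw [mul_one, ← hy e e.2, Finsupp.sum]
    refine Finset.sum_subset (Finset.subset_biUnion_of_mem (fun e => e.1.support) e.2) ?_
    intro k _ hk
    rw [Finsupp.notMem_support_iff.1 hk, map_zero, zero_mul]
  obtain ⟨x, hx⟩ := hf.mem_range_of_tmul_mem_range u ⟨_, key.symm⟩
  exact ⟨x, fun e he => by rw [← hu x ⟨e, he⟩, hx]⟩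

theorem isFinitelySolvable (hf : IsPureHom f) :
    IsFinitelySolvable {e : (B →₀ A) × A |
      Finsupp.linearCombination A (PushMod.of f) e.1 = PushMod.of f (f e.2)} := by
  intro t ht
  obtain ⟨x, hx⟩ := hf.exists_solution t id fun e he => ht he
  exact ⟨Finsupp.linearCombination A x, hx⟩

end IsPureHom

/-- If `(A, 𝔪)` is a noetherian complete local ring, then every pure ring homomorphism
`f : A → B` splits as a homomorphism of `A`-modules. -/
theorem pure_ringHom_splits_of_complete_local
    {A B : Type u} [CommRing A] [CommRing B] [IsNoetherianRing A] [IsLocalRing A]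
    [IsAdicComplete (IsLocalRing.maximalIdeal A) A]
    (f : A →+* B) (hf : IsPureHom f) :
    ∃ g : PushMod f →ₗ[A] A, ∀ a : A, g (PushMod.of f (f a)) = a := by
  let π := Finsupp.linearCombination A (PushMod.of f)
  obtain ⟨φ, hφ⟩ := isLinearlyCompact_of_isAdicComplete.exists_linearMap hf.isFinitelySolvable
  have hπ : Function.Surjective π := fun p =>
    ⟨Finsupp.single p 1, (Finsupp.linearCombination_single A 1 p).trans (one_smul A _)⟩
  have hker : LinearMap.ker π ≤ LinearMap.ker φ := fun c hc =>
    hφ (c, 0) (by rw [Set.mem_ofPred_eq, map_zero]; exact hc)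
  refine ⟨(LinearMap.ker π).liftQ φ hker ∘ₗ (π.quotKerEquivOfSurjective hπ).symm, fun a => ?_⟩
  have hsingle : π (Finsupp.single 1 a) = PushMod.of f (f a) :=
    (Finsupp.linearCombination_single A a 1).trans (congrArg (PushMod.of f) (mul_one (f a)))
  rw [← hsingle, LinearMap.comp_apply, LinearEquiv.coe_coe,
    LinearMap.quotKerEquivOfSurjective_symm_apply, Submodule.liftQ_apply]
  exact hφ (Finsupp.single 1 a, a) hsingle
end

section
/- Unboundedness of residue characteristics: Let A be an integral domain of characteristic zero that is finitely generated as a ℤ-algebra (so the canonical map ℤ → A is injective). Then the set of characteristics of the residue fields of A at its maximal ideals is unbounded: for every natural number N there exists a maximal ideal 𝔪 ⊆ A such that A/𝔪 is a field of prime characteristic greater than N. -/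
universe u

/-! Finitely generated `ℤ`-algebras are Jacobson rings, so in the reduced ring `A` the nonzero
element `N!` avoids some maximal ideal `𝔪`. By Zariski's lemma `A/𝔪` is a finite `ℤ`-module, so
it cannot contain `ℚ` and has prime characteristic `p`; as `N!` is nonzero in `A/𝔪`, `p > N`. -/

open Ideal

lemma isJacobsonRing_of_jacobson_bot_eq_bot {R : Type*} [CommRing R] [Ring.DimensionLEOne R]
    (h : jacobson (⊥ : Ideal R) = ⊥) : IsJacobsonRing R := by
  refine isJacobsonRing_iff_prime_eq.mpr fun P hP => ?_
  rcases eq_or_ne P ⊥ with rfl | hP_ne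
  · exact h
  · have := Ring.DimensionLEOne.maximalOfPrime hP_ne hP
    exact jacobson_eq_self_of_isMaximal

lemma Int.jacobson_bot : jacobson (⊥ : Ideal ℤ) = ⊥ := by
  refine eq_bot_iff.mpr fun x hx => ?_
  have hunit : x * x + 1 = 1 ∨ x * x + 1 = -1 := Int.isUnit_iff.mp (mem_jacobson_bot.mp hx x)
  rw [Submodule.mem_bot]
  rcases hunit with h | h <;> nlinarith

instance Int.isJacobsonRing : IsJacobsonRing ℤ :=
  isJacobsonRing_of_jacobson_bot_eq_bot Int.jacobson_bot

lemma IsJacobsonRing.exists_isMaximal_notMem {R : Type*} [CommRing R] [IsJacobsonRing R]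
    [IsReduced R] {x : R} (hx : x ≠ 0) : ∃ m : Ideal R, m.IsMaximal ∧ x ∉ m := by
  have : x ∉ jacobson (⊥ : Ideal R) := by
    rwa [← radical_eq_jacobson, radical_bot_of_isReduced, Submodule.mem_bot]
  simpa [jacobson, Submodule.mem_sInf] using this

lemma ringChar_prime_of_finiteType_int (K : Type*) [Field K] [Algebra.FiniteType ℤ K] :
    (ringChar K).Prime := by
  have : Module.Finite ℤ K := finite_of_finite_type_of_isJacobsonRing ℤ K
  refine (CharP.char_is_prime_or_zero K _).resolve_right fun h => ?_
  have : CharP K 0 := h ▸ ringChar.charP K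
  have : CharZero K := CharP.charP_to_charZero K
  -- otherwise `ℤ ⊆ K` is an integral extension of a field, so `ℤ` would be a field
  exact IsMaximal.ne_bot_of_isIntegral_int (⊥ : Ideal K) rfl

lemma CharP.lt_of_factorial_cast_ne_zero {R : Type*} [AddMonoidWithOne R] (p : ℕ) [CharP R p]
    (hp : 0 < p) {N : ℕ} (h : (N.factorial : R) ≠ 0) : N < p := by
  by_contra! hle
  exact h ((CharP.cast_eq_zero_iff R p _).mpr (Nat.dvd_factorial hp hle))

/-- **Unboundedness of residue characteristics**: if `A` is an integral domain of characteristic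
zero that is finitely generated as a `ℤ`-algebra, then for every `N` there is a maximal ideal
`𝔪 ⊆ A` whose residue field `A/𝔪` has prime characteristic greater than `N`. -/
theorem residue_characteristics_unbounded
    {A : Type u} [CommRing A] [IsDomain A] [CharZero A] [Algebra.FiniteType ℤ A] :
    ∀ N : ℕ, ∃ m : Ideal A, m.IsMaximal ∧ ∃ q : ℕ, q.Prime ∧ N < q ∧ CharP (A ⧸ m) q := by
  intro N
  have : IsJacobsonRing A := isJacobsonRing_of_finiteType (A := ℤ)
  obtain ⟨m, hm, hN⟩ := IsJacobsonRing.exists_isMaximal_notMem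
    (Nat.cast_ne_zero.mpr N.factorial_ne_zero : (N.factorial : A) ≠ 0)
  let : Field (A ⧸ m) := Quotient.field m
  -- `toIntAlgHom` targets the `ℤ`-algebra structure of the field `A ⧸ m`, not `Quotient.algebra`
  have := Algebra.FiniteType.of_surjective (Ideal.Quotient.mk m).toIntAlgHom
    Ideal.Quotient.mk_surjective
  have hq := ringChar_prime_of_finiteType_int (A ⧸ m)
  refine ⟨m, hm, ringChar (A ⧸ m), hq,
    CharP.lt_of_factorial_cast_ne_zero (R := A ⧸ m) _ hq.pos ?_, ringChar.charP _⟩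
  rwa [← map_natCast (Ideal.Quotient.mk m), Ne, Quotient.eq_zero_iff_mem]
end
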